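/- arXiv:2107.12353 — 2 statements merged into one kernel-verified Lean document; each statement's English description precedes it below -/
import Mathlib

section
/- A cyclic permutation [σ] of length n avoids the vincular cyclic pattern [\overline{12}43] if and only if for every cyclic ascent of [σ], say from a to b with a < b, the element b belongs to the reverse Zeilberger set of [σ] (i.e., reading once around the circle starting from b, the elements greater than b appear in increasing order). -/
/-- The position obtained from `p` by moving `k` steps forward cyclically. -/
def cyc {n : ℕ} (p : Fin n) (k : ℕ) : Fin n :=
  ⟨(p.val + k) % n, Nat.mod_lt _ p.pos⟩

/-- Contains the vincular cyclic pattern 12-43: entries \`a = σ p\`, \`b = σ (p+1)\`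
cyclically adjacent, followed (going once around the circle) by \`c = σ (p+k)\` and
then \`d = σ (p+l)\` with \`a < b < d < c\`. -/
def Contains1243 {n : ℕ} (σ : Equiv.Perm (Fin n)) : Prop :=
  ∃ (p : Fin n) (k l : ℕ), 2 ≤ k ∧ k < l ∧ l < n ∧
    σ p < σ (cyc p 1) ∧ σ (cyc p 1) < σ (cyc p l) ∧ σ (cyc p l) < σ (cyc p k)

variable {n : ℕ}

lemma cyc_cyc (p : Fin n) (a b : ℕ) : cyc (cyc p a) b = cyc p (a + b) :=
  Fin.ext (by simp only [cyc, Nat.mod_add_mod, Nat.add_assoc])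

@[simp]
lemma cyc_zero (p : Fin n) : cyc p 0 = p :=
  Fin.ext (by simp [cyc, Nat.mod_eq_of_lt p.isLt])

lemma cyc_self (p : Fin n) : cyc p n = p :=
  Fin.ext (by simp [cyc, Nat.mod_eq_of_lt p.isLt])

lemma cyc_injOn (p : Fin n) : Set.InjOn (cyc p) (Set.Iio n) := by
  intro a ha b hb h
  have hab : p.val + a ≡ p.val + b [MOD n] := congrArg Fin.val h
  exact (Nat.ModEq.add_left_cancel' _ hab).eq_of_lt_of_lt ha hb

variable {σ : Equiv.Perm (Fin n)}

lemma contains1243_of_ascent_of_descent_above {p : Fin n} {k l : ℕ}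
    (hasc : σ p < σ (cyc p 1)) (hkl : k < l) (hln : l < n)
    (hbl : σ (cyc p 1) < σ (cyc (cyc p 1) l))
    (hlk : σ (cyc (cyc p 1) l) < σ (cyc (cyc p 1) k)) :
    Contains1243 σ := by
  have hk : k ≠ 0 := by
    rintro rfl
    exact lt_asymm hbl (by simpa using hlk)
  have hl : l + 1 ≠ n := by
    intro hn
    -- reading `n - 1` steps on from `b` wraps around to `a`
    have hwrap : cyc (cyc p 1) l = p := by rw [cyc_cyc, Nat.add_comm, hn, cyc_self]
    rw [hwrap] at hbl
    exact lt_asymm hasc hbl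
  simp only [cyc_cyc] at hbl hlk
  exact ⟨p, 1 + k, 1 + l, by omega, by omega, by omega, hasc, hbl, hlk⟩

/-- a cyclic permutation avoids the vincular cyclic pattern 12-43
iff for every cyclic ascent `σ p < σ (p+1)`, reading once around the circle
starting from `b = σ (p+1)`, the elements greater than `b` appear in increasing
order (i.e. `b` lies in the reverse Zeilberger set). -/
theorem stmt10 (n : ℕ) (σ : Equiv.Perm (Fin n)) :
    ¬ Contains1243 σ ↔
      ∀ p : Fin n, σ p < σ (cyc p 1) →
        ∀ k l : ℕ, k < l → l < n →
          σ (cyc p 1) < σ (cyc (cyc p 1) k) →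
          σ (cyc p 1) < σ (cyc (cyc p 1) l) →
          σ (cyc (cyc p 1) k) < σ (cyc (cyc p 1) l) := by
  constructor
  · intro havoid p hasc k l hkl hln _ hbl
    rcases lt_trichotomy (σ (cyc (cyc p 1) k)) (σ (cyc (cyc p 1) l)) with hlt | heq | hgt
    · exact hlt
    · exact absurd (σ.injective heq) ((cyc_injOn _).ne (hkl.trans hln) hln hkl.ne)
    · exact absurd (contains1243_of_ascent_of_descent_above hasc hkl hln hbl hgt) havoid
  · rintro H ⟨p, k, l, hk, hkl, hln, hasc, hbl, hlk⟩
    obtain ⟨k, rfl⟩ : ∃ k', k = 1 + k' := ⟨k - 1, by omega⟩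
    obtain ⟨l, rfl⟩ : ∃ l', l = 1 + l' := ⟨l - 1, by omega⟩
    simp only [← cyc_cyc] at hbl hlk
    exact lt_asymm hlk (H p hasc k l (by omega) (by omega) (hbl.trans hlk) hbl)
end

section
/- For every k ≥ 1, any subset Π of S_k (viewed as consecutive cyclic patterns of length k) with |Π| ≥ k! − k + 1 is unavoidable: no cyclic permutation of length n ≥ k avoids all patterns in Π. -/
/-- The window of `k` cyclically consecutive entries of `σ` starting at position
`p` is order isomorphic to the pattern `π`. -/
def WindowIso {n k : ℕ} (σ : Equiv.Perm (Fin n)) (p : Fin n)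
    (π : Equiv.Perm (Fin k)) : Prop :=
  ∀ a b : Fin k, (σ (cyc p a.val) < σ (cyc p b.val) ↔ π a < π b)

lemma exists_perm_lt_iff_lt {k : ℕ} {α : Type*} [LinearOrder α] {f : Fin k → α}
    (hf : Function.Injective f) :
    ∃ π : Equiv.Perm (Fin k), ∀ a b : Fin k, f a < f b ↔ π a < π b := by
  classical
  have hcard : (Finset.univ.image f).card = k := by
    rw [Finset.card_image_of_injective _ hf, Finset.card_univ, Fintype.card_fin]
  let e := (Finset.univ.image f).orderIsoOfFin hcard
  let g : Fin k → Fin k := fun a => e.symm ⟨f a, Finset.mem_image_of_mem f (Finset.mem_univ a)⟩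
  have hg : Function.Injective g := fun a b hab => hf (Subtype.mk_eq_mk.mp (e.symm.injective hab))
  refine ⟨Equiv.ofBijective g (Finite.injective_iff_bijective.mp hg), fun a b => ?_⟩
  simp only [Equiv.ofBijective_apply, g, e.symm.lt_iff_lt, Subtype.mk_lt_mk]

lemma exists_forall_apply_eq_mem_of_card_compl_lt {α : Type*} [Fintype α] [DecidableEq α]
    {Pat : Finset (Equiv.Perm α)} (hPat : Patᶜ.card < Fintype.card α) (z : α) :
    ∃ i : α, ∀ π : Equiv.Perm α, π i = z → π ∈ Pat := by
  by_contra! hmiss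
  choose h hz hout using hmiss
  have hinj : Function.Injective h := fun a b hab => by
    rw [← (h a).symm_apply_apply a, ← (h b).symm_apply_apply b, hz, hz, hab]
  have hsub : Finset.univ.image h ⊆ Patᶜ := by
    simpa [Finset.image_subset_iff] using hout
  have := Finset.card_le_card hsub
  rw [Finset.card_image_of_injective _ hinj, Finset.card_univ] at this
  omega

lemma cyc_injective {n k : ℕ} (hkn : k ≤ n) (p : Fin n) :
    Function.Injective fun a : Fin k => cyc p a.val := fun a b hab => by
  have hmod : p.val + a.val ≡ p.val + b.val [MOD n] := congrArg Fin.val hab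
  have := Nat.ModEq.add_left_cancel' p.val hmod
  rwa [Nat.ModEq, Nat.mod_eq_of_lt (a.isLt.trans_le hkn), Nat.mod_eq_of_lt (b.isLt.trans_le hkn),
    ← Fin.ext_iff] at this

lemma exists_cyc_eq {n : ℕ} (q : Fin n) {i : ℕ} (hi : i < n) : ∃ p : Fin n, cyc p i = q := by
  refine ⟨⟨(q.val + (n - i)) % n, Nat.mod_lt _ q.pos⟩, Fin.ext ?_⟩
  simp only [cyc, Nat.mod_add_mod]
  rw [show q.val + (n - i) + i = q.val + n by omega, Nat.add_mod_right, Nat.mod_eq_of_lt q.isLt]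

lemma exists_windowIso {n k : ℕ} (hkn : k ≤ n) (σ : Equiv.Perm (Fin n)) (p : Fin n) :
    ∃ π : Equiv.Perm (Fin k), WindowIso σ p π :=
  exists_perm_lt_iff_lt (σ.injective.comp (cyc_injective hkn p))

lemma apply_eq_zero_of_forall_le {k : ℕ} {α : Type*} [LinearOrder α] {f : Fin k → α}
    {π : Equiv.Perm (Fin k)} (hπ : ∀ a b : Fin k, f a < f b ↔ π a < π b) {i : Fin k}
    (hmin : ∀ a, f i ≤ f a) : (π i).val = 0 := by
  have := (hπ (π.symm ⟨0, i.pos⟩) i).not.mp (not_lt.mpr (hmin _))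
  simp only [Equiv.apply_symm_apply, not_lt] at this
  exact Nat.le_zero.mp this

/-- any set of at least `k! - k + 1` consecutive cyclic patterns of
length `k` is unavoidable: every cyclic permutation of length `n ≥ k` contains
one of them as `k` cyclically consecutive entries. -/
theorem stmt17 (k : ℕ) (hk : 1 ≤ k) (Pat : Finset (Equiv.Perm (Fin k)))
    (hcard : Nat.factorial k - k + 1 ≤ Pat.card) (n : ℕ) (hn : k ≤ n)
    (σ : Equiv.Perm (Fin n)) :
    ∃ π ∈ Pat, ∃ p : Fin n, WindowIso σ p π := by
  have hcompl : Patᶜ.card < Fintype.card (Fin k) := by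
    have huniv : Pat.card ≤ Nat.factorial k := by
      simpa only [Fintype.card_perm, Fintype.card_fin] using Pat.card_le_univ
    rw [Finset.card_compl, Fintype.card_perm, Fintype.card_fin]
    omega
  obtain ⟨i, hi⟩ := exists_forall_apply_eq_mem_of_card_compl_lt hcompl ⟨0, hk⟩
  have hn1 : 0 < n := hk.trans hn
  obtain ⟨p, hp⟩ := exists_cyc_eq (σ.symm ⟨0, hn1⟩) (i.isLt.trans_le hn)
  obtain ⟨π, hπ⟩ := exists_windowIso hn σ p
  have hmin : ∀ a : Fin k, σ (cyc p i.val) ≤ σ (cyc p a.val) := fun a => by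
    rw [hp, Equiv.apply_symm_apply]
    exact Nat.zero_le _
  exact ⟨π, hi π (Fin.ext (apply_eq_zero_of_forall_le hπ hmin)), p, hπ⟩
end
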